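/- Let G be a finite simple bipartite graph with parts of sizes n_1 ≥ 1 and n_2 ≥ 1 such that 2n_1 ≤ √(n_2). Then G is hypoenergetic: E(G) < n, where n = n_1 + n_2 is the number of vertices of G. -/

import Mathlib

/-!
Writing `A` for the adjacency matrix, `E(G) = ∑ √νᵢ` over the eigenvalues `νᵢ` of `A Aᵀ`, so
Cauchy–Schwarz over the nonzero ones gives `E(G)² ≤ rank A · tr(A Aᵀ)`. Every edge meets `V₁`,
hence `rank A ≤ 2 n₁`, and `tr(A Aᵀ) = ∑ deg v = 2 |E| ≤ 2 n₁ n₂`. Therefore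
`E(G)² ≤ (2 n₁)² n₂ ≤ n₂²`, i.e. `E(G) ≤ n₂ < n`.
-/

open Matrix Finset

/-- The energy of the vertex `i` of a finite simple graph `G`:
the `(i,i)` entry of `|A| = (A Aᴴ)^{1/2}`, where `A` is the adjacency matrix. -/
noncomputable def vertexEnergy {n : ℕ} (G : SimpleGraph (Fin n)) [DecidableRel G.Adj]
    (i : Fin n) : ℝ :=
  let hA := (Matrix.posSemidef_self_mul_conjTranspose (G.adjMatrix ℝ)).1
  (hA.eigenvectorUnitary.1 * diagonal ((RCLike.ofReal : ℝ → ℝ) ∘ (√·) ∘ hA.eigenvalues) *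
    (star hA.eigenvectorUnitary : Matrix (Fin n) (Fin n) ℝ)) i i

/-- The energy of a finite simple graph: the sum of the energies of its vertices. -/
noncomputable def graphEnergy {n : ℕ} (G : SimpleGraph (Fin n)) [DecidableRel G.Adj] : ℝ :=
  ∑ i, vertexEnergy G i

theorem sq_sum_sqrt_le_card_ne_zero_mul_sum {ι : Type*} [Fintype ι] (ν : ι → ℝ)
    (hν : ∀ i, 0 ≤ ν i) : (∑ i, √(ν i)) ^ 2 ≤ #{i | ν i ≠ 0} * ∑ i, ν i := by
  have hsupp : ∑ i with ν i ≠ 0, √(ν i) = ∑ i, √(ν i) :=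
    sum_filter_of_ne fun i _ h hν0 => h (by rw [hν0, Real.sqrt_zero])
  calc (∑ i, √(ν i)) ^ 2 = (∑ i with ν i ≠ 0, √(ν i)) ^ 2 := by rw [hsupp]
    _ ≤ #{i | ν i ≠ 0} * ∑ i with ν i ≠ 0, √(ν i) ^ 2 := sq_sum_le_card_mul_sum_sq
    _ ≤ #{i | ν i ≠ 0} * ∑ i, ν i := by
      simp_rw [Real.sq_sqrt (hν _)]
      exact mul_le_mul_of_nonneg_left (sum_le_univ_sum_of_nonneg hν) (Nat.cast_nonneg _)

namespace Matrix

variable {n K : Type*} [Fintype n]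

theorem rank_add_le {m : Type*} [Field K] (A B : Matrix m n K) :
    (A + B).rank ≤ A.rank + B.rank := by
  rw [Matrix.rank, Matrix.rank, Matrix.rank, mulVecLin_add]
  exact (Submodule.finrank_mono (LinearMap.range_add_le _ _)).trans
    (Submodule.finrank_add_le_finrank_add_finrank _ _)

/-- `A = P A + (1 - P) A P` for the coordinate projection `P` onto `S`, and both terms have
rank at most `#S`. -/
theorem rank_le_two_mul_card_of_apply_eq_zero [Field K] (A : Matrix n n K) (S : Finset n)
    (hA : ∀ i j, i ∉ S → j ∉ S → A i j = 0) : A.rank ≤ 2 * #S := by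
  classical
  set P : Matrix n n K := diagonal fun i => if i ∈ S then 1 else 0
  have hP : P.rank = #S := by
    rw [rank_diagonal, Fintype.card_subtype]
    congr 1
    ext i
    by_cases hi : i ∈ S <;> simp [hi]
  have hsplit : A = P * A + (1 - P) * A * P := by
    ext i j
    by_cases hi : i ∈ S <;> by_cases hj : j ∈ S <;>
      simp [P, sub_mul, mul_diagonal, diagonal_mul, hi, hj, hA i j]
  have hsum := rank_add_le (P * A) ((1 - P) * A * P)
  rw [← hsplit] at hsum
  calc A.rank ≤ (P * A).rank + ((1 - P) * A * P).rank := hsum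
    _ ≤ P.rank + P.rank := add_le_add (rank_mul_le_left _ _) (rank_mul_le_right _ _)
    _ = 2 * #S := by rw [hP, two_mul]

theorem trace_unitary_mul_diagonal_mul_star [DecidableEq n] {R : Type*} [CommRing R]
    [StarRing R] (U : unitary (Matrix n n R)) (d : n → R) :
    (U.1 * diagonal d * star U.1).trace = ∑ i, d i := by
  rw [trace_mul_cycle, Unitary.coe_star_mul_self, one_mul, trace_diagonal]

theorem PosSemidef.sq_sum_sqrt_eigenvalues_le [DecidableEq n] {M : Matrix n n ℝ}
    (hM : M.PosSemidef) :
    (∑ i, √(hM.1.eigenvalues i)) ^ 2 ≤ M.rank * M.trace := by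
  rw [hM.1.rank_eq_card_non_zero_eigs, Fintype.card_subtype, hM.1.trace_eq_sum_eigenvalues]
  exact sq_sum_sqrt_le_card_ne_zero_mul_sum _ hM.eigenvalues_nonneg

end Matrix

namespace SimpleGraph

theorem trace_adjMatrix_mul_conjTranspose {V : Type*} [Fintype V] [DecidableEq V]
    (G : SimpleGraph V) [DecidableRel G.Adj] :
    (G.adjMatrix ℝ * (G.adjMatrix ℝ)ᴴ).trace = ∑ v, (G.degree v : ℝ) := by
  rw [conjTranspose_eq_transpose_of_trivial, transpose_adjMatrix]
  simp only [trace, diag_apply, adjMatrix_mul_self_apply_self]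

theorem graphEnergy_eq_sum_sqrt_eigenvalues {n : ℕ} (G : SimpleGraph (Fin n))
    [DecidableRel G.Adj] :
    graphEnergy G = ∑ i, √((posSemidef_self_mul_conjTranspose (G.adjMatrix ℝ)).1.eigenvalues i) :=
  trace_unitary_mul_diagonal_mul_star _ _

theorem graphEnergy_sq_le_rank_mul_sum_degrees {n : ℕ} (G : SimpleGraph (Fin n))
    [DecidableRel G.Adj] :
    graphEnergy G ^ 2 ≤ (G.adjMatrix ℝ).rank * ∑ v, (G.degree v : ℝ) := by
  have h := (posSemidef_self_mul_conjTranspose (G.adjMatrix ℝ)).sq_sum_sqrt_eigenvalues_le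
  rwa [rank_self_mul_conjTranspose, trace_adjMatrix_mul_conjTranspose,
    ← graphEnergy_eq_sum_sqrt_eigenvalues] at h

variable {V : Type*} [Fintype V] {G : SimpleGraph V} [DecidableRel G.Adj]
  {s t : Finset V}

theorem IsBipartiteWith.rank_adjMatrix_le [DecidableEq V] {K : Type*} [Field K]
    (h : G.IsBipartiteWith s t) :
    (G.adjMatrix K).rank ≤ 2 * #s := by
  refine rank_le_two_mul_card_of_apply_eq_zero _ s fun i j hi hj => ?_
  have hij : ¬ G.Adj i j := fun hadj => by
    rcases h.mem_of_adj hadj with ⟨hi', _⟩ | ⟨_, hj'⟩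
    exacts [hi hi', hj hj']
  simp [hij]

theorem IsBipartiteWith.sum_degrees_le (h : G.IsBipartiteWith s t) :
    ∑ v, G.degree v ≤ 2 * (#s * #t) := by
  rw [sum_degrees_eq_twice_card_edges, ← isBipartiteWith_sum_degrees_eq_card_edges h]
  gcongr
  simpa using sum_le_card_nsmul s _ _ fun v hv => isBipartiteWith_degree_le h hv

end SimpleGraph

theorem stmt_16_general {n : ℕ} (G : SimpleGraph (Fin n)) [DecidableRel G.Adj]
    (V₁ V₂ : Finset (Fin n)) (hdisj : Disjoint V₁ V₂)
    (hbip : ∀ u v : Fin n, G.Adj u v → (u ∈ V₁ ∧ v ∈ V₂) ∨ (u ∈ V₂ ∧ v ∈ V₁))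
    (n₁ n₂ : ℕ) (hn₁ : n₁ = V₁.card) (hn₂ : n₂ = V₂.card)
    (h₁ : 1 ≤ n₁)
    (hsmall : 2 * (n₁ : ℝ) ≤ Real.sqrt (n₂ : ℝ)) :
    graphEnergy G < n := by
  have hG : G.IsBipartiteWith V₁ V₂ := ⟨disjoint_coe.mpr hdisj, hbip⟩
  have hrank : ((G.adjMatrix ℝ).rank : ℝ) ≤ 2 * n₁ := by
    exact_mod_cast hn₁ ▸ hG.rank_adjMatrix_le
  have hdeg : ∑ v, (G.degree v : ℝ) ≤ 2 * (n₁ * n₂) := by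
    exact_mod_cast hn₁ ▸ hn₂ ▸ hG.sum_degrees_le
  have hcard : n₁ + n₂ ≤ n := by
    simpa [hn₁, hn₂, card_union_of_disjoint hdisj] using card_le_univ (V₁ ∪ V₂)
  have hn₂_sq : (2 * n₁ : ℝ) ^ 2 ≤ n₂ :=
    (Real.le_sqrt (by positivity) (Nat.cast_nonneg _)).mp hsmall
  have hE : graphEnergy G ≤ n₂ := by
    refine le_of_pow_le_pow_left₀ two_ne_zero (Nat.cast_nonneg _) ?_
    calc graphEnergy G ^ 2 ≤ (G.adjMatrix ℝ).rank * ∑ v, (G.degree v : ℝ) :=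
          G.graphEnergy_sq_le_rank_mul_sum_degrees
      _ ≤ 2 * n₁ * (2 * (n₁ * n₂)) := by gcongr
      _ = (2 * n₁ : ℝ) ^ 2 * n₂ := by ring
      _ ≤ (n₂ : ℝ) ^ 2 := by rw [sq (n₂ : ℝ)]; gcongr
  have : (n₂ : ℝ) < n := by exact_mod_cast (by omega : n₂ < n)
  linarith

theorem stmt_16 {n : ℕ} (G : SimpleGraph (Fin n)) [DecidableRel G.Adj]
    (V₁ V₂ : Finset (Fin n)) (hdisj : Disjoint V₁ V₂) (hcover : V₁ ∪ V₂ = Finset.univ)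
    (hbip : ∀ u v : Fin n, G.Adj u v → (u ∈ V₁ ∧ v ∈ V₂) ∨ (u ∈ V₂ ∧ v ∈ V₁))
    (n₁ n₂ : ℕ) (hn₁ : n₁ = V₁.card) (hn₂ : n₂ = V₂.card)
    (h₁ : 1 ≤ n₁) (h₂ : 1 ≤ n₂)
    (hsmall : 2 * (n₁ : ℝ) ≤ Real.sqrt (n₂ : ℝ)) :
    graphEnergy G < n :=
  stmt_16_general G V₁ V₂ hdisj hbip n₁ n₂ hn₁ hn₂ h₁ hsmall
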